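/- For all real t and x, with ξ = (t+x)/2 and η = (t−x)/2 and t ≥ 0, one has ⟨ξ⟩^{-(1+δ)}⟨η⟩^{-(1+δ)} ≤ C ⟨t⟩^{-(1+δ)} ⟨t−|x|⟩^{-(1+δ)}, where C depends only on δ > 0. -/

import Mathlib

/-! Both sides are even in `x`, so take `x ≥ 0`. Then `16 ⟨ξ⟩² ⟨η⟩² = (4 + (t+x)²)(4 + (t-x)²)`,
which dominates `⟨t⟩² ⟨t-x⟩²` because `0 ≤ t ≤ t + x`. Raising this to the negative power
`-(1+δ)/2` reverses it, with the constant `C = 16^((1+δ)/2)`. -/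

lemma rpow_mul_rpow_le_of_mul_le_const_mul {a b c d k e : ℝ} (ha : 0 < a) (hb : 0 < b)
    (hc : 0 < c) (hd : 0 < d) (hk : 0 < k) (he : e ≤ 0) (h : c * d ≤ k * (a * b)) :
    a ^ e * b ^ e ≤ k ^ (-e) * c ^ e * d ^ e :=
  calc a ^ e * b ^ e = (a * b) ^ e := (Real.mul_rpow ha.le hb.le).symm
    _ ≤ (c * d / k) ^ e :=
      Real.rpow_le_rpow_of_nonpos (by positivity) (by rwa [div_le_iff₀' hk]) he
    _ = k ^ (-e) * c ^ e * d ^ e := by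
      rw [Real.div_rpow (by positivity) hk.le, Real.mul_rpow hc.le hd.le, Real.rpow_neg hk.le]
      ring

lemma one_add_sq_mul_one_add_sub_sq_le {t y : ℝ} (ht : 0 ≤ t) (hy : 0 ≤ y) :
    (1 + t ^ 2) * (1 + (t - y) ^ 2) ≤ (4 + (t + y) ^ 2) * (4 + (t - y) ^ 2) := by
  have ht_le : 1 + t ^ 2 ≤ 4 + (t + y) ^ 2 := by nlinarith [mul_nonneg ht hy]
  gcongr
  linarith

lemma one_add_sq_mul_one_add_sub_abs_sq_le {t : ℝ} (ht : 0 ≤ t) (x : ℝ) :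
    (1 + t ^ 2) * (1 + (t - |x|) ^ 2) ≤
      16 * ((1 + ((t + x) / 2) ^ 2) * (1 + ((t - x) / 2) ^ 2)) := by
  have heven : 16 * ((1 + ((t + x) / 2) ^ 2) * (1 + ((t - x) / 2) ^ 2)) =
      (4 + (t + |x|) ^ 2) * (4 + (t - |x|) ^ 2) := by
    rcases abs_cases x with ⟨hx, _⟩ | ⟨hx, _⟩ <;> (rw [hx]; ring)
  rw [heven]
  exact one_add_sq_mul_one_add_sub_sq_le ht (abs_nonneg x)

/-- For t ≥ 0, with ξ = (t+x)/2 and η = (t−x)/2: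
    ⟨ξ⟩^{-(1+δ)}⟨η⟩^{-(1+δ)} ≤ C⟨t⟩^{-(1+δ)}⟨t−|x|⟩^{-(1+δ)}, C depending only on δ > 0. -/
theorem stmt_9 (δ : ℝ) (hδ : 0 < δ) :
    ∃ C : ℝ, 0 < C ∧ ∀ t x : ℝ, 0 ≤ t →
      (1 + ((t + x) / 2) ^ 2) ^ (-(1 + δ) / 2) * (1 + ((t - x) / 2) ^ 2) ^ (-(1 + δ) / 2) ≤
        C * (1 + t ^ 2) ^ (-(1 + δ) / 2) * (1 + (t - |x|) ^ 2) ^ (-(1 + δ) / 2) := by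
  refine ⟨16 ^ (-(-(1 + δ) / 2)), by positivity, fun t x ht => ?_⟩
  exact rpow_mul_rpow_le_of_mul_le_const_mul (by positivity) (by positivity) (by positivity)
    (by positivity) (by norm_num) (by linarith) (one_add_sq_mul_one_add_sub_abs_sq_le ht x)
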